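/- Let u be a standard Gaussian vector in ℝ^d, let H be a d×d symmetric positive semidefinite matrix, and let Σ be a d×d symmetric positive definite matrix. Then (1/2) · E_u[(uᵀΣ^{1/2}HΣ^{1/2}u) · (Σ^{-1/2}uuᵀΣ^{-1/2} − Σ^{-1})] = H. -/

import Mathlib

open MeasureTheory ProbabilityTheory Matrix
open scoped BigOperators RealInnerProductSpace

noncomputable section

abbrev Vec (d : ℕ) := EuclideanSpace ℝ (Fin d)
abbrev Mat (d : ℕ) := Matrix (Fin d) (Fin d) ℝ

/-- View a Euclidean vector as a plain function. -/
def toPi {d : ℕ} (u : Vec d) : Fin d → ℝ := u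
/-- View a plain function as a Euclidean vector. -/
def ofPi {d : ℕ} (u : Fin d → ℝ) : Vec d := WithLp.toLp 2 u

/-- Matrix-vector multiplication on Euclidean space. -/
def mvec {d : ℕ} (A : Mat d) (u : Vec d) : Vec d := ofPi (A.mulVec (toPi u))

/-- The standard Gaussian measure N(0, I_d) on ℝ^d. -/
def gaussD (d : ℕ) : Measure (Vec d) :=
  (Measure.pi fun _ : Fin d => gaussianReal 0 1).map (MeasurableEquiv.toLp 2 (Fin d → ℝ))

/-- Frobenius norm of a matrix. -/
def matFrobNorm {m n : ℕ} (A : Matrix (Fin m) (Fin n) ℝ) : ℝ :=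
  Real.sqrt (∑ i, ∑ j, (A i j) ^ 2)

/-- Operator (spectral) norm of a matrix. -/
def matOpNorm {m n : ℕ} (A : Matrix (Fin m) (Fin n) ℝ) : ℝ :=
  ‖LinearMap.toContinuousLinearMap (Matrix.toEuclideanLin A)‖

/-- Loewner order `A ⪯ B`. -/
def loeLE {d : ℕ} (A B : Mat d) : Prop := (B - A).PosSemidef

/-- Hessian matrix of `f` at `x`. -/
def hess {d : ℕ} (f : Vec d → ℝ) (x : Vec d) : Mat d :=
  Matrix.of fun i j =>
    iteratedFDeriv ℝ 2 f x ![EuclideanSpace.single i 1, EuclideanSpace.single j 1]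

/-- Membership in `S = {Σ symmetric : ζ⁻¹ I ⪯ Σ ⪯ τ⁻¹ I}`. -/
def Smem {d : ℕ} (τ ζ : ℝ) (A : Mat d) : Prop :=
  A.IsSymm ∧ loeLE (ζ⁻¹ • 1) A ∧ loeLE A (τ⁻¹ • 1)

/-- Membership in `S' = {A symmetric : τ I ⪯ A ⪯ ζ I}`. -/
def S'mem {d : ℕ} (τ ζ : ℝ) (A : Mat d) : Prop :=
  A.IsSymm ∧ loeLE (τ • 1) A ∧ loeLE A (ζ • 1)

/-- The positive semidefinite square root (as defined in the older Mathlib). -/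
def Matrix.PosSemidef.sqrt {n : Type*} [Fintype n] [DecidableEq n] {𝕜 : Type*} [RCLike 𝕜] [PartialOrder 𝕜] [StarOrderedRing 𝕜]
    {A : Matrix n n 𝕜} (hA : A.PosSemidef) : Matrix n n 𝕜 :=
  hA.1.eigenvectorUnitary.1 * diagonal ((↑) ∘ (√·) ∘ hA.1.eigenvalues) *
    (star hA.1.eigenvectorUnitary : Matrix n n 𝕜)

/-- The regularized reparameterized objective `Q_α(μ, Σ)`. -/
def Qa {d : ℕ} (f : Vec d → ℝ) (α : ℝ) (μ : Vec d) (S : Mat d) (hS : S.PosSemidef) : ℝ :=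
  (∫ u, f (μ + α • mvec hS.sqrt u) ∂ gaussD d) - α ^ 2 / 2 * Real.log S.det


/-! Written in coordinates, the integrand is a polynomial of degree four in independent standard
normals. Isserlis' formula `E[u_k u_l u_m u_n] = δ_kl δ_mn + δ_km δ_ln + δ_kn δ_lm` gives, for any
matrices `A` and `B`, `E[(uᵀAu) ((Bu)(Bu)ᵀ - BBᵀ)] = B (A + Aᵀ) Bᵀ`: the trace term `tr A · BBᵀ` is
cancelled by the centering. For `A = Σ^{1/2} H Σ^{1/2}` and `B = Σ^{-1/2}` this is `H + Hᵀ = 2 H`. -/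

open Real
open scoped NNReal Nat

lemma integrable_pow_gaussianReal (μ : ℝ) (v : ℝ≥0) (n : ℕ) :
    Integrable (fun x => x ^ n) (gaussianReal μ v) :=
  (memLp_id_gaussianReal (μ := μ) (v := v) n).integrable_norm_pow'.mono' (by fun_prop)
    (ae_of_all _ fun x => by simp [norm_pow])

lemma integral_pow_gaussianReal_of_odd (v : ℝ≥0) {n : ℕ} (hn : Odd n) :
    ∫ x, x ^ n ∂gaussianReal 0 v = 0 := by
  have hneg : (gaussianReal 0 v).map (fun x => -x) = gaussianReal 0 v := by
    simpa using gaussianReal_map_neg (μ := 0) (v := v)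
  have h : ∫ x, x ^ n ∂gaussianReal 0 v = -∫ x, x ^ n ∂gaussianReal 0 v := by
    conv_lhs => rw [← hneg, integral_map (by fun_prop) (by fun_prop)]
    simp only [hn.neg_pow, integral_neg]
  linarith

lemma integral_pow_two_mul_gaussianReal (k : ℕ) :
    ∫ x, x ^ (2 * k) ∂gaussianReal 0 1 = (2 * k - 1 : ℕ)‼ := by
  rw [integral_gaussianReal_eq_integral_smul one_ne_zero]
  obtain ⟨g, hg⟩ : ∃ g : ℝ → ℝ,
      g = fun y => (√(2 * π))⁻¹ * (y ^ ((2 * k : ℕ) : ℝ) * rexp (-(1 / 2) * y ^ (2 : ℝ))) :=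
    ⟨_, rfl⟩
  have heven : (fun x : ℝ => gaussianPDFReal 0 1 x • x ^ (2 * k)) = fun x => g |x| := by
    ext x
    simp only [hg, gaussianPDFReal, smul_eq_mul, rpow_natCast, rpow_two, pow_mul, sq_abs]
    push_cast
    ring_nf
  rw [heven, integral_comp_abs (f := g), hg, integral_const_mul,
    integral_rpow_mul_exp_neg_mul_rpow (by norm_num)
      (by linarith [Nat.cast_nonneg (α := ℝ) (2 * k)]) (by norm_num)]
  have hΓ : ((2 * k : ℕ) + 1 : ℝ) / 2 = k + 1 / 2 := by push_cast; ring
  have hpow : (1 / 2 : ℝ) ^ (-((2 * k : ℕ) + 1 : ℝ) / 2) = 2 ^ k * √2 := by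
    rw [show -((2 * k : ℕ) + 1 : ℝ) / 2 = -(k + 1 / 2) by push_cast; ring, rpow_neg (by norm_num),
      div_rpow zero_le_one zero_le_two, one_rpow, inv_div, div_one, rpow_add two_pos, rpow_natCast,
      ← sqrt_eq_rpow]
  rw [hΓ, Gamma_nat_add_half, hpow, sqrt_mul (by norm_num)]
  have : 0 < √π := sqrt_pos.2 pi_pos
  field_simp

abbrev stdGaussianPi (ι : Type*) [Fintype ι] : Measure (ι → ℝ) :=
  Measure.pi fun _ => gaussianReal 0 1

section StdGaussianPi

variable {ι : Type*} [Fintype ι] [DecidableEq ι]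

lemma Multiset.prod_map_eq_prod_pow_count {M : Type*} [CommMonoid M] (s : Multiset ι)
    (f : ι → M) : (s.map f).prod = ∏ i, f i ^ s.count i := by
  rw [Finset.prod_multiset_map_count]
  exact Finset.prod_subset (Finset.subset_univ _) fun i _ hi => by
    rw [Multiset.count_eq_zero.2 (by simpa using hi), pow_zero]

lemma integrable_multiset_prod_stdGaussianPi (s : Multiset ι) :
    Integrable (fun x => (s.map x).prod) (stdGaussianPi ι) := by
  simp_rw [Multiset.prod_map_eq_prod_pow_count]
  exact Integrable.fintype_prod (f := fun i t => t ^ s.count i)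
    fun i => integrable_pow_gaussianReal 0 1 _

lemma integral_multiset_prod_stdGaussianPi (s : Multiset ι) :
    ∫ x, (s.map x).prod ∂stdGaussianPi ι =
      ∏ i ∈ s.toFinset, ∫ t, t ^ s.count i ∂gaussianReal 0 1 := by
  simp_rw [Multiset.prod_map_eq_prod_pow_count]
  rw [integral_fintype_prod_eq_prod (f := fun i t => t ^ s.count i)]
  refine (Finset.prod_subset (Finset.subset_univ _) fun i _ hi => ?_).symm
  rw [Multiset.count_eq_zero.2 (by simpa using hi)]
  simp

lemma integrable_mul_stdGaussianPi (k l : ι) :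
    Integrable (fun x => x k * x l) (stdGaussianPi ι) := by
  simpa using integrable_multiset_prod_stdGaussianPi {k, l}

lemma integrable_mul_mul_mul_stdGaussianPi (k l m n : ι) :
    Integrable (fun x => x k * x l * x m * x n) (stdGaussianPi ι) := by
  simpa [mul_assoc] using integrable_multiset_prod_stdGaussianPi {k, l, m, n}

lemma integral_mul_stdGaussianPi (k l : ι) :
    ∫ x, x k * x l ∂stdGaussianPi ι = (1 : Matrix ι ι ℝ) k l := by
  rw [show (fun x : ι → ℝ => x k * x l) = fun x => (({k, l} : Multiset ι).map x).prod
    by ext x; simp, integral_multiset_prod_stdGaussianPi]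
  have m2 : ∫ t, t ^ 2 ∂gaussianReal 0 1 = 1 := by
    simpa using integral_pow_two_mul_gaussianReal 1
  by_cases hkl : k = l <;>
    simp_all [Finset.prod_insert, Multiset.count_cons, Matrix.one_apply, eq_comm]

lemma integral_mul_mul_mul_stdGaussianPi (k l m n : ι) :
    ∫ x, x k * x l * x m * x n ∂stdGaussianPi ι =
      (1 : Matrix ι ι ℝ) k l * (1 : Matrix ι ι ℝ) m n +
        (1 : Matrix ι ι ℝ) k m * (1 : Matrix ι ι ℝ) l n +
        (1 : Matrix ι ι ℝ) k n * (1 : Matrix ι ι ℝ) l m := by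
  rw [show (fun x : ι → ℝ => x k * x l * x m * x n) =
      fun x => (({k, l, m, n} : Multiset ι).map x).prod by ext x; simp [mul_assoc],
    integral_multiset_prod_stdGaussianPi]
  obtain ⟨M, hM⟩ : ∃ M : ℕ → ℝ, ∀ n, ∫ t, t ^ n ∂gaussianReal 0 1 = M n := ⟨_, fun _ => rfl⟩
  have m1 : M 1 = 0 := hM 1 ▸ integral_pow_gaussianReal_of_odd 1 odd_one
  have m2 : M 2 = 1 := hM 2 ▸ by simpa using integral_pow_two_mul_gaussianReal 1
  have m3 : M 3 = 0 := hM 3 ▸ integral_pow_gaussianReal_of_odd 1 (by decide)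
  -- one for each of the three pairings of four indices
  have m4 : M 4 = 1 + 1 + 1 := hM 4 ▸ by
    rw [integral_pow_two_mul_gaussianReal 2]; norm_num [Nat.doubleFactorial]
  simp only [hM]
  clear hM
  by_cases hkl : k = l <;> by_cases hkm : k = m <;> by_cases hkn : k = n <;>
    by_cases hlm : l = m <;> by_cases hln : l = n <;> by_cases hmn : m = n <;>
    simp_all [Finset.prod_insert, Multiset.count_cons, Matrix.one_apply, eq_comm]

end StdGaussianPi

section QuadForm

variable {ι : Type*} [Fintype ι]

lemma integral_sum_sum_const_mul {Ω : Type*} [MeasurableSpace Ω] {μ : Measure Ω}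
    {f : ι → ι → Ω → ℝ} (hf : ∀ k l, Integrable (f k l) μ) (c : ι → ι → ℝ) :
    ∫ ω, ∑ k, ∑ l, c k l * f k l ω ∂μ = ∑ k, ∑ l, c k l * ∫ ω, f k l ω ∂μ := by
  rw [integral_finsetSum _ fun k _ => integrable_finsetSum _ fun l _ => (hf k l).const_mul _]
  simp_rw [integral_finsetSum _ fun l _ => (hf _ l).const_mul _, integral_const_mul]

lemma dotProduct_mulVec_self (A : Matrix ι ι ℝ) (x : ι → ℝ) :
    x ⬝ᵥ A *ᵥ x = ∑ k, ∑ l, A k l * (x k * x l) := by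
  simp only [dotProduct, mulVec, Finset.mul_sum]
  exact Finset.sum_congr rfl fun k _ => Finset.sum_congr rfl fun l _ => by ring

lemma dotProduct_mulVec_self_mul (A : Matrix ι ι ℝ) (x : ι → ℝ) (m n : ι) :
    (x ⬝ᵥ A *ᵥ x) * (x m * x n) = ∑ k, ∑ l, A k l * (x k * x l * x m * x n) := by
  simp only [dotProduct_mulVec_self, Finset.sum_mul]
  exact Finset.sum_congr rfl fun k _ => Finset.sum_congr rfl fun l _ => by ring

lemma mulVec_apply_mul_mulVec_apply (B : Matrix ι ι ℝ) (x : ι → ℝ) (i j : ι) :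
    (B *ᵥ x) i * (B *ᵥ x) j = ∑ m, ∑ n, B i m * B j n * (x m * x n) := by
  simp only [mulVec, dotProduct, Finset.sum_mul_sum]
  exact Finset.sum_congr rfl fun m _ => Finset.sum_congr rfl fun n _ => by ring

variable [DecidableEq ι]

lemma integrable_dotProduct_mulVec_self_stdGaussianPi (A : Matrix ι ι ℝ) :
    Integrable (fun x => x ⬝ᵥ A *ᵥ x) (stdGaussianPi ι) := by
  simp_rw [dotProduct_mulVec_self]
  exact integrable_finsetSum _ fun k _ => integrable_finsetSum _ fun l _ =>
    (integrable_mul_stdGaussianPi k l).const_mul _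

lemma integrable_dotProduct_mulVec_self_mul_stdGaussianPi (A : Matrix ι ι ℝ) (m n : ι) :
    Integrable (fun x => (x ⬝ᵥ A *ᵥ x) * (x m * x n)) (stdGaussianPi ι) := by
  simp_rw [dotProduct_mulVec_self_mul]
  exact integrable_finsetSum _ fun k _ => integrable_finsetSum _ fun l _ =>
    (integrable_mul_mul_mul_stdGaussianPi k l m n).const_mul _

lemma integral_dotProduct_mulVec_self_stdGaussianPi (A : Matrix ι ι ℝ) :
    ∫ x, x ⬝ᵥ A *ᵥ x ∂stdGaussianPi ι = A.trace := by
  simp_rw [dotProduct_mulVec_self]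
  rw [integral_sum_sum_const_mul integrable_mul_stdGaussianPi (fun k l => A k l)]
  simp_rw [integral_mul_stdGaussianPi]
  simp [Matrix.one_apply, Matrix.trace]

lemma integral_dotProduct_mulVec_self_mul_stdGaussianPi (A : Matrix ι ι ℝ) (m n : ι) :
    ∫ x, (x ⬝ᵥ A *ᵥ x) * (x m * x n) ∂stdGaussianPi ι =
      A.trace * (1 : Matrix ι ι ℝ) m n + A m n + A n m := by
  simp_rw [dotProduct_mulVec_self_mul]
  rw [integral_sum_sum_const_mul (fun k l => integrable_mul_mul_mul_stdGaussianPi k l m n)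
    (fun k l => A k l)]
  simp_rw [integral_mul_mul_mul_stdGaussianPi]
  simp [Matrix.one_apply, Matrix.trace, mul_add, Finset.sum_add_distrib]

lemma integral_dotProduct_mulVec_self_mul_sub_stdGaussianPi (A B : Matrix ι ι ℝ) (i j : ι) :
    ∫ x, (x ⬝ᵥ A *ᵥ x) * ((B *ᵥ x) i * (B *ᵥ x) j - (B * Bᵀ) i j) ∂stdGaussianPi ι =
      (B * (A + Aᵀ) * Bᵀ) i j := by
  have hexpand (x : ι → ℝ) : (x ⬝ᵥ A *ᵥ x) * ((B *ᵥ x) i * (B *ᵥ x) j - (B * Bᵀ) i j) =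
      ∑ m, ∑ n, B i m * B j n * ((x ⬝ᵥ A *ᵥ x) * (x m * x n)) - (B * Bᵀ) i j * (x ⬝ᵥ A *ᵥ x) := by
    rw [mulVec_apply_mul_mulVec_apply, mul_sub, Finset.mul_sum]
    simp_rw [Finset.mul_sum]
    congr 1
    · exact Finset.sum_congr rfl fun m _ => Finset.sum_congr rfl fun n _ => by ring
    · ring
  simp_rw [hexpand]
  rw [integral_sub (integrable_finsetSum _ fun m _ => integrable_finsetSum _ fun n _ =>
      (integrable_dotProduct_mulVec_self_mul_stdGaussianPi A m n).const_mul _)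
      ((integrable_dotProduct_mulVec_self_stdGaussianPi A).const_mul _),
    integral_sum_sum_const_mul (integrable_dotProduct_mulVec_self_mul_stdGaussianPi A)
      (fun m n => B i m * B j n), integral_const_mul]
  simp_rw [integral_dotProduct_mulVec_self_mul_stdGaussianPi,
    integral_dotProduct_mulVec_self_stdGaussianPi]
  simp only [Matrix.mul_apply, Matrix.one_apply, Matrix.add_apply, Matrix.transpose_apply, mul_add,
    add_mul, mul_ite, mul_one, mul_zero, Finset.sum_add_distrib, Finset.sum_ite_eq, Finset.mem_univ,
    if_true, Finset.sum_mul]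
  rw [add_assoc, add_sub_cancel_left]
  congr 1 <;> rw [Finset.sum_comm] <;>
    exact Finset.sum_congr rfl fun m _ => Finset.sum_congr rfl fun n _ => by ring

end QuadForm

namespace Matrix.PosSemidef

variable {n : Type*} [Fintype n] [DecidableEq n] {A : Matrix n n ℝ}

lemma isSymm_sqrt (hA : A.PosSemidef) : hA.sqrt.IsSymm := by
  simp [IsSymm, Matrix.PosSemidef.sqrt, transpose_mul, Matrix.star_eq_conjTranspose, mul_assoc]

lemma sqrt_mul_self (hA : A.PosSemidef) : hA.sqrt * hA.sqrt = A := by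
  conv_rhs => rw [hA.1.spectral_theorem]
  have hU : (star hA.1.eigenvectorUnitary : Matrix n n ℝ) * hA.1.eigenvectorUnitary.1 = 1 :=
    Unitary.coe_star_mul_self _
  simp only [Matrix.PosSemidef.sqrt, Unitary.conjStarAlgAut_apply, mul_assoc]
  rw [← mul_assoc _ hA.1.eigenvectorUnitary.1, hU, one_mul, ← mul_assoc (diagonal _),
    diagonal_mul_diagonal]
  simp [Real.mul_self_sqrt, hA.eigenvalues_nonneg]

end Matrix.PosSemidef

lemma toPi_ofPi {d : ℕ} (x : Fin d → ℝ) : toPi (ofPi x) = x := rfl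

lemma integral_gaussD {d : ℕ} (f : Vec d → ℝ) :
    ∫ u, f u ∂gaussD d = ∫ x, f (ofPi x) ∂stdGaussianPi (Fin d) :=
  integral_map_equiv _ f

lemma inner_mvec {d : ℕ} (A : Mat d) (u : Vec d) : ⟪u, mvec A u⟫ = toPi u ⬝ᵥ A *ᵥ toPi u := by
  simp [mvec, ofPi, toPi, EuclideanSpace.inner_eq_star_dotProduct, dotProduct_comm]

lemma inv_mul_conj_add_transpose_mul_inv_transpose {n : Type*} [Fintype n] [DecidableEq n]
    {s : Matrix n n ℝ} (hs : IsUnit s.det) (hsT : sᵀ = s) (H : Matrix n n ℝ) :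
    s⁻¹ * (s * H * s + (s * H * s)ᵀ) * (s⁻¹)ᵀ = H + Hᵀ := by
  rw [transpose_nonsing_inv, hsT, transpose_mul, transpose_mul, hsT, mul_add, add_mul]
  simp [mul_assoc, nonsing_inv_mul_cancel_left _ _ hs, mul_nonsing_inv _ hs]

theorem stmt5_general {d : ℕ} (H S : Mat d)
    (hHsymm : H.IsSymm) (hS : S.PosDef) :
    (Matrix.of fun i j => (1 / 2) * ∫ u,
        ⟪u, mvec (hS.posSemidef.sqrt * H * hS.posSemidef.sqrt) u⟫ *
          (((hS.posSemidef.sqrt)⁻¹.mulVec (toPi u)) i *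
             ((hS.posSemidef.sqrt)⁻¹.mulVec (toPi u)) j - S⁻¹ i j) ∂ gaussD d)
      = H := by
  set s := hS.posSemidef.sqrt
  have hss : s * s = S := hS.posSemidef.sqrt_mul_self
  have hsT : sᵀ = s := hS.posSemidef.isSymm_sqrt
  have hs : IsUnit s.det := by
    rw [isUnit_iff_ne_zero]
    intro h0
    simpa [← hss, det_mul, h0] using hS.det_pos
  have hinv : s⁻¹ * (s⁻¹)ᵀ = S⁻¹ := by
    rw [transpose_nonsing_inv, hsT, ← Matrix.mul_inv_rev, hss]
  ext i j
  have key := integral_dotProduct_mulVec_self_mul_sub_stdGaussianPi (s * H * s) s⁻¹ i j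
  rw [hinv, inv_mul_conj_add_transpose_mul_inv_transpose hs hsT, hHsymm.eq, Matrix.add_apply] at key
  simp only [of_apply, integral_gaussD, inner_mvec, toPi_ofPi, key]
  ring

/-- `(1/2)·E_u[(uᵀΣ^{1/2}HΣ^{1/2}u)(Σ^{-1/2}uuᵀΣ^{-1/2} − Σ^{-1})] = H`. -/
theorem stmt5 {d : ℕ} (hd : 1 ≤ d) (H S : Mat d)
    (hHsymm : H.IsSymm) (hH : H.PosSemidef) (hSsymm : S.IsSymm) (hS : S.PosDef) :
    (Matrix.of fun i j => (1 / 2) * ∫ u,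
        ⟪u, mvec (hS.posSemidef.sqrt * H * hS.posSemidef.sqrt) u⟫ *
          (((hS.posSemidef.sqrt)⁻¹.mulVec (toPi u)) i *
             ((hS.posSemidef.sqrt)⁻¹.mulVec (toPi u)) j - S⁻¹ i j) ∂ gaussD d)
      = H :=
  stmt5_general H S hHsymm hS
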